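/- arXiv:1905.01508 — 3 statements merged into one kernel-verified Lean document; each statement's English description precedes it below -/
import Mathlib

section
/- Let X be a normal projective variety of dimension d over a field k and let D = Σ_{i=1}^r a_iE_i be an effective Cartier divisor on X, where the E_i are prime divisors and a_i ∈ ℤ_+. For a prime divisor E and m ∈ ℕ let τ_{E,m}(D) = min{ord_E(Δ) : Δ ∈ |mD|} and γ_E(D) = inf_m τ_{E,m}(D)/m. Then for all m ∈ ℕ, Γ(X, O_X(mD)) = Γ(X, O_X(mD − Σ_{i=1}^r ⌈m·γ_{E_i}(D)⌉E_i)) = Γ(X, O_X(⌊mD − Σ_{i=1}^r m·γ_{E_i}(D)·E_i⌋)). -/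
/-!
A nonzero section `f` of `mD` gives the member `div f + mD` of `|mD|`, whose coefficient along
`E_j` is at least `τ_{E_j,m}(D) ≥ m γ_{E_j}(D)`; being an integer, it is at least `⌈m γ_{E_j}(D)⌉`.
Hence `f` is already a section of `mD - Σ_j ⌈m γ_{E_j}(D)⌉ E_j`, and the reverse inclusion holds
because `γ ≥ 0`. The rounded-down divisor is the same one: `mD` has integer coefficients and the
`E_j` are distinct, so `⌊mD - Σ_j m γ_j E_j⌋ = mD - Σ_j ⌈m γ_j⌉ E_j`.
-/

universe u

open scoped Classical

/-- The prime (Weil) divisors of a normal projective variety `X` over `k` with function field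
`F`, encoded by their order-of-vanishing valuations `ord i` on `F`. -/
structure PrimeDivisors (k F : Type u) [Field k] [Field F] [Algebra k F] where
  /-- the index type of the prime divisors of `X` -/
  ι : Type u
  /-- the discrete valuation `ord_E` given by the order of vanishing along a prime divisor -/
  ord : ι → F → WithTop ℤ
  ord_top : ∀ i x, ord i x = ⊤ ↔ x = 0
  ord_mul : ∀ i x y, ord i (x * y) = ord i x + ord i y
  ord_add : ∀ i x y, min (ord i x) (ord i y) ≤ ord i (x + y)
  /-- nonzero constants have neither zeros nor poles -/
  ord_const : ∀ i, ∀ c : k, c ≠ 0 → ord i (algebraMap k F c) = 0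
  /-- a nonzero rational function has only finitely many zeros and poles -/
  finite_support : ∀ x : F, x ≠ 0 → {i | ord i x ≠ 0}.Finite

variable {k F : Type u} [Field k] [Field F] [Algebra k F]

/-- The space of global sections `Γ(X, O_X(B)) = {f ∈ F ∣ (f) + B ≥ 0} ∪ {0}` of the divisor
`B = Σᵢ bᵢ Eᵢ`. -/
def PrimeDivisors.sections (X : PrimeDivisors k F) (b : X.ι → ℤ) : Submodule k F where
  carrier := {f | ∀ i, ((-(b i) : ℤ) : WithTop ℤ) ≤ X.ord i f}
  zero_mem' := by
    intro i
    rw [(X.ord_top i 0).mpr rfl]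
    exact le_top
  add_mem' := by
    intro x y hx hy i
    exact le_trans (le_min (hx i) (hy i)) (X.ord_add i x y)
  smul_mem' := by
    intro c x hx i
    by_cases hc : c = 0
    · subst hc
      rw [zero_smul, (X.ord_top i 0).mpr rfl]
      exact le_top
    · rw [Algebra.smul_def, X.ord_mul i, X.ord_const i c hc, zero_add]
      exact hx i

/-- `τ_{E,m}(D) = min {ord_E Δ ∣ Δ ∈ |mD|}`: the minimum of `ord_{E_j} f + m a_j` over the
nonzero `f ∈ Γ(X, O_X(mD))`. -/
noncomputable def PrimeDivisors.tau (X : PrimeDivisors k F) (A : X.ι → ℕ)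
    (E : Fin r → X.ι) (a : Fin r → ℕ) (j : Fin r) (m : ℕ) : ℕ :=
  sInf {t : ℕ | ∃ f : F, f ≠ 0 ∧ f ∈ X.sections (fun i => (m * A i : ℤ)) ∧
    X.ord (E j) f = (((t : ℤ) - (m : ℤ) * (a j : ℤ) : ℤ) : WithTop ℤ)}

/-- `γ_E(D) = inf_{m ≥ 1} τ_{E,m}(D)/m`. -/
noncomputable def PrimeDivisors.gammaE (X : PrimeDivisors k F) (A : X.ι → ℕ)
    (E : Fin r → X.ι) (a : Fin r → ℕ) (j : Fin r) : ℝ :=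
  ⨅ m : {m : ℕ // 0 < m}, (X.tau A E a j m : ℝ) / (m : ℝ)

lemma Function.Injective.map_sum_ite_eq {ι M N : Type*} [AddCommMonoid M] [AddCommMonoid N]
    {r : ℕ} {E : Fin r → ι} (hE : Function.Injective E) (φ : M → N) (hφ : φ 0 = 0)
    (x : Fin r → M) (i : ι) :
    φ (∑ j, if E j = i then x j else 0) = ∑ j, if E j = i then φ (x j) else 0 := by
  by_cases hi : ∃ j, E j = i
  · obtain ⟨j, rfl⟩ := hi
    simp only [hE.eq_iff, Finset.sum_ite_eq', Finset.mem_univ, if_true]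
  · push Not at hi
    simp only [hi, if_false, Finset.sum_const_zero, hφ]

lemma Int.floor_intCast_sub {R : Type*} [Ring R] [LinearOrder R] [FloorRing R]
    [IsStrictOrderedRing R] (z : ℤ) (x : R) : ⌊(z : R) - x⌋ = z - ⌈x⌉ := by
  rw [sub_eq_add_neg, Int.floor_intCast_add, Int.floor_neg, ← sub_eq_add_neg]

namespace PrimeDivisors

variable (X : PrimeDivisors k F)

lemma sections_mono : Monotone X.sections := fun _ _ h _ hf i =>
  le_trans (WithTop.coe_le_coe.mpr (neg_le_neg (h i))) (hf i)

variable {r : ℕ} (A : X.ι → ℕ) (E : Fin r → X.ι) (a : Fin r → ℕ) (j : Fin r)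

lemma gammaE_nonneg : 0 ≤ X.gammaE A E a j :=
  Real.iInf_nonneg fun _ => by positivity

lemma natCast_mul_gammaE_le_tau (m : ℕ) : (m : ℝ) * X.gammaE A E a j ≤ X.tau A E a j m := by
  rcases Nat.eq_zero_or_pos m with rfl | hm
  · simp
  have hbdd : BddBelow (Set.range fun p : {m : ℕ // 0 < m} =>
      (X.tau A E a j p : ℝ) / (p : ℝ)) :=
    ⟨0, by rintro _ ⟨p, rfl⟩; positivity⟩
  have hle : X.gammaE A E a j ≤ (X.tau A E a j m : ℝ) / m := ciInf_le hbdd ⟨m, hm⟩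
  rwa [le_div_iff₀ (by exact_mod_cast hm), mul_comm] at hle

variable {X A E a j}

lemma tau_le_ord_add (hA : A (E j) = a j) {m : ℕ} {f : F} (hf0 : f ≠ 0)
    (hf : f ∈ X.sections fun i => (m * A i : ℤ)) {n : ℤ} (hn : X.ord (E j) f = n) :
    (X.tau A E a j m : ℤ) ≤ n + m * a j := by
  have hlow : -(m * a j : ℤ) ≤ n := by
    have hj : ((-(m * A (E j) : ℤ)) : WithTop ℤ) ≤ n := hn ▸ hf (E j)
    rw [hA] at hj
    exact_mod_cast hj
  have htau : X.tau A E a j m ≤ (n + m * a j).toNat :=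
    Nat.sInf_le ⟨f, hf0, hf, by rw [hn, Int.toNat_of_nonneg (by omega), add_sub_cancel_right]⟩
  omega

lemma ceil_mul_gammaE_le_ord_add (hA : A (E j) = a j) {m : ℕ} {f : F} (hf0 : f ≠ 0)
    (hf : f ∈ X.sections fun i => (m * A i : ℤ)) {n : ℤ} (hn : X.ord (E j) f = n) :
    ⌈(m : ℝ) * X.gammaE A E a j⌉ ≤ n + m * a j :=
  Int.ceil_le.mpr <| (X.natCast_mul_gammaE_le_tau A E a j m).trans <| by
    exact_mod_cast tau_le_ord_add hA hf0 hf hn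

lemma sections_le_sections_sub_ceil (hE : Function.Injective E) (hAE : ∀ j, A (E j) = a j)
    (m : ℕ) :
    X.sections (fun i => (m * A i : ℤ)) ≤ X.sections fun i =>
      (m * A i : ℤ) - ∑ j, if E j = i then ⌈(m : ℝ) * X.gammaE A E a j⌉ else 0 := by
  intro f hf i
  rcases eq_or_ne f 0 with rfl | hf0
  · exact (X.ord_top i 0).mpr rfl ▸ le_top
  by_cases hi : ∃ j, E j = i
  · obtain ⟨j, rfl⟩ := hi
    obtain ⟨n, hn⟩ := WithTop.ne_top_iff_exists.mp (mt (X.ord_top (E j) f).mp hf0)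
    have hceil := ceil_mul_gammaE_le_ord_add (hAE j) hf0 hf hn.symm
    simp only [hE.eq_iff, Finset.sum_ite_eq', Finset.mem_univ, if_true, hAE j, ← hn]
    exact WithTop.coe_le_coe.mpr (by omega)
  · push Not at hi
    simpa only [hi, if_false, Finset.sum_const_zero, sub_zero] using hf i

end PrimeDivisors

theorem sections_eq_sections_sub_gamma_general
    (X : PrimeDivisors k F)
    (r : ℕ) (E : Fin r → X.ι) (hEinj : Function.Injective E)
    (a : Fin r → ℕ)
    (A : X.ι → ℕ) (hAE : ∀ j, A (E j) = a j) :
    ∀ m : ℕ,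
      X.sections (fun i => (m * A i : ℤ)) =
        X.sections (fun i =>
          (m * A i : ℤ) - ∑ j : Fin r, if E j = i then ⌈(m : ℝ) * X.gammaE A E a j⌉ else 0) ∧
      X.sections (fun i =>
          (m * A i : ℤ) - ∑ j : Fin r, if E j = i then ⌈(m : ℝ) * X.gammaE A E a j⌉ else 0) =
        X.sections (fun i =>
          ⌊((m * A i : ℕ) : ℝ) - ∑ j : Fin r, if E j = i then (m : ℝ) * X.gammaE A E a j
            else 0⌋) := by
  intro m
  refine ⟨le_antisymm (X.sections_le_sections_sub_ceil hEinj hAE m)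
    (X.sections_mono fun i => sub_le_self _ (Finset.sum_nonneg fun j _ => ?_)),
    congrArg X.sections (funext fun i => ?_)⟩
  · split_ifs
    exacts [Int.ceil_nonneg (mul_nonneg m.cast_nonneg (X.gammaE_nonneg A E a j)), le_rfl]
  · rw [← hEinj.map_sum_ite_eq (fun x : ℝ => ⌈x⌉) Int.ceil_zero,
      show ((m * A i : ℕ) : ℝ) = ((m * A i : ℤ) : ℝ) by push_cast; rfl, Int.floor_intCast_sub]

/-- **Lemma 4.1.**  Let `X` be a normal projective variety of dimension `d` over
a field `k` and `D = Σ_{j=1}^r a_j E_j` an effective Cartier divisor on `X`, with the `E_j`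
prime divisors and `a_j ∈ ℤ₊`.  Then for all `m ∈ ℕ`,
`Γ(X, O_X(mD)) = Γ(X, O_X(mD - Σ_j ⌈m γ_{E_j}(D)⌉ E_j))
             = Γ(X, O_X(⌊mD - Σ_j m γ_{E_j}(D) E_j⌋))`. -/
theorem sections_eq_sections_sub_gamma
    (d : ℕ) (basis : ∃ x : Fin d → F, IsTranscendenceBasis k x)
    (X : PrimeDivisors k F)
    (r : ℕ) (E : Fin r → X.ι) (hEinj : Function.Injective E)
    (a : Fin r → ℕ) (hapos : ∀ j, 0 < a j)
    (A : X.ι → ℕ) (hAE : ∀ j, A (E j) = a j) (hA0 : ∀ i, (∀ j, E j ≠ i) → A i = 0) :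
    ∀ m : ℕ,
      X.sections (fun i => (m * A i : ℤ)) =
        X.sections (fun i =>
          (m * A i : ℤ) - ∑ j : Fin r, if E j = i then ⌈(m : ℝ) * X.gammaE A E a j⌉ else 0) ∧
      X.sections (fun i =>
          (m * A i : ℤ) - ∑ j : Fin r, if E j = i then ⌈(m : ℝ) * X.gammaE A E a j⌉ else 0) =
        X.sections (fun i =>
          ⌊((m * A i : ℕ) : ℝ) - ∑ j : Fin r, if E j = i then (m : ℝ) * X.gammaE A E a j
            else 0⌋) :=
  sections_eq_sections_sub_gamma_general X r E hEinj a A hAE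
end

section
/- Let R be a two-dimensional excellent normal local ring and φ : X → Spec(R) a resolution of singularities. Suppose D_1 ≤ D_2 are effective divisors on X with exceptional support, with respective anti-nef parts Δ_1 and Δ_2 of their Zariski decompositions. Then (Δ_2²) ≤ (Δ_1²), with equality if and only if Δ_1 = Δ_2. -/
universe u

open Filter IsLocalRing

/-- The length of an `R`-module `M`: the supremum of the lengths of chains of submodules. -/
noncomputable def moduleLength (R : Type*) [Ring R] (M : Type*) [AddCommGroup M]
    [Module R M] : WithBot ℕ∞ :=
  Order.krullDim (Submodule R M)

/-- The length of an `R`-module as a real number (junk value if the length is infinite). -/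
noncomputable def rlen (R : Type*) [Ring R] (M : Type*) [AddCommGroup M] [Module R M] : ℝ :=
  (WithBot.unbotD 0 (moduleLength R M)).toNat

/-- A Noetherian local ring is *regular* if its maximal ideal can be generated by
`dim R` elements. -/
def IsRegularLocalRing' (A : Type u) [CommRing A] : Prop :=
  IsNoetherianRing A ∧ IsLocalRing A ∧
    ∃ n : ℕ, ringKrullDim A = n ∧ ∃ f : Fin n → A,
      (Ideal.span (Set.range f)).IsMaximal

/-- A commutative ring is *regular* if it is Noetherian and all of its localizations
at prime ideals are regular local rings. -/
def IsRegularRing' (A : Type u) [CommRing A] : Prop :=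
  IsNoetherianRing A ∧ ∀ (p : Ideal A) (hp : p.IsPrime),
    haveI := hp
    IsRegularLocalRing' (Localization.AtPrime p)

/-- An algebra `A` over a field `k` is *geometrically regular* if `L ⊗ₖ A` is a regular ring
for every finite field extension `L` of `k`. -/
def IsGeometricallyRegular (k A : Type u) [Field k] [CommRing A] [Algebra k A] : Prop :=
  ∀ (L : Type u) [Field L] [Algebra k L], Module.Finite k L →
    IsRegularRing' (TensorProduct k L A)

/-- A chain of primes is saturated if no further prime can be inserted. -/
def SaturatedChain {α : Type*} [Preorder α] (c : LTSeries α) : Prop :=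
  ∀ i : Fin c.length, ∀ x, ¬ (c.toFun i.castSucc < x ∧ x < c.toFun i.succ)

/-- A ring is catenary if any two saturated chains of prime ideals with the same endpoints
have the same length. -/
def IsCatenary (A : Type u) [CommRing A] : Prop :=
  ∀ c₁ c₂ : LTSeries (PrimeSpectrum A),
    c₁.head = c₂.head → c₁.last = c₂.last →
      SaturatedChain c₁ → SaturatedChain c₂ → c₁.length = c₂.length

/-- The formal fibres of a Noetherian local ring are geometrically regular if for every prime
`p` the fibre `κ(p) ⊗_R R̂` of the completion map over `p` is geometrically regular over the
residue field `κ(p) = Frac(R/p)`. -/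
def HasGeomRegularFormalFibres (R : Type u) [CommRing R] [IsLocalRing R] : Prop :=
  ∀ (p : Ideal R) (hp : p.IsPrime),
    haveI := hp
    IsGeometricallyRegular (FractionRing (R ⧸ p))
      (TensorProduct R (FractionRing (R ⧸ p))
        (AdicCompletion (IsLocalRing.maximalIdeal R) R))

/-- A Noetherian local ring is *excellent* if it is universally catenary and its formal fibres
are geometrically regular (for local rings this recovers the usual definition of an excellent
ring, since a semilocal ring with geometrically regular formal fibres is J-2). -/
class IsExcellentLocalRing (R : Type u) [CommRing R] [IsLocalRing R] : Prop where
  noetherian : IsNoetherianRing R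
  universallyCatenary : ∀ n : ℕ, IsCatenary (MvPolynomial (Fin n) R)
  geomRegularFormalFibres : HasGeomRegularFormalFibres R

/-- The data of a resolution of singularities `φ : X → Spec R` of a two-dimensional local
domain: the divisorial valuations `μ i` of the prime exceptional curves `E₁, …, E_s` together
with their (negative definite) intersection matrix `Q i j = (E_i · E_j)`. -/
structure ResolutionData (R : Type u) [CommRing R] [IsDomain R] [IsLocalRing R] where
  /-- the number of prime exceptional curves -/
  s : ℕ
  /-- the divisorial valuation of each prime exceptional curve, restricted to `R` -/
  μ : Fin s → R → ℕ∞
  μ_top : ∀ i x, μ i x = ⊤ ↔ x = 0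
  μ_mul : ∀ i x y, μ i (x * y) = μ i x + μ i y
  μ_add : ∀ i x y, min (μ i x) (μ i y) ≤ μ i (x + y)
  μ_one : ∀ i, μ i 1 = 0
  /-- the exceptional curves all contract to the closed point `m_R` -/
  μ_max : ∀ i, ∀ x ∈ IsLocalRing.maximalIdeal R, x ≠ 0 → 0 < μ i x
  /-- the intersection matrix `(E_i · E_j)` of the exceptional curves -/
  Q : Matrix (Fin s) (Fin s) ℚ
  Q_symm : Q.IsSymm
  /-- the intersection matrix is negative definite -/
  Q_negdef : ∀ v : Fin s → ℚ, v ≠ 0 → ∑ i, ∑ j, v i * Q i j * v j < 0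
  /-- the exceptional part `Σᵢ μᵢ(f) Eᵢ` of the divisor of `0 ≠ f ∈ R` is anti-nef
  (since `((f) · E_j) = 0` and the remaining part of `(f)` is effective) -/
  principal_antinef : ∀ x : R, x ≠ 0 → ∀ j, ∑ i, ((μ i x).toNat : ℚ) * Q i j ≤ 0

variable {R : Type u} [CommRing R] [IsDomain R] [IsLocalRing R]

/-- For the effective divisor `F = Σᵢ aᵢ Eᵢ` with exceptional support, the ideal
`I(F) = Γ(X, O_X(-F)) ∩ R = {f ∈ R ∣ μᵢ(f) ≥ aᵢ for all i}` (equal to `Γ(X, O_X(-F))`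
when `R` is normal). -/
def ResolutionData.idl (X : ResolutionData R) (a : Fin X.s → ℕ) : Ideal R where
  carrier := {f | ∀ i, (a i : ℕ∞) ≤ X.μ i f}
  zero_mem' := by
    intro i
    simp [(X.μ_top i 0).mpr rfl]
  add_mem' := by
    intro x y hx hy i
    exact le_trans (le_min (hx i) (hy i)) (X.μ_add i x y)
  smul_mem' := by
    intro c x hx i
    rw [smul_eq_mul, X.μ_mul i c x]
    exact (hx i).trans (self_le_add_left _ _)

/-- The intersection product `(Σᵢ vᵢ Eᵢ · Σⱼ wⱼ Eⱼ)` of exceptional `ℚ`-divisors. -/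
def ResolutionData.inter (X : ResolutionData R) (v w : Fin X.s → ℚ) : ℚ :=
  ∑ i, ∑ j, v i * X.Q i j * w j

/-- An exceptional `ℚ`-divisor `C` is anti-nef if `(C · E_j) ≤ 0` for all exceptional
curves `E_j`. -/
def ResolutionData.AntiNef (X : ResolutionData R) (v : Fin X.s → ℚ) : Prop :=
  ∀ j, ∑ i, v i * X.Q i j ≤ 0

/-- `Δ` is the anti-nef part of the Zariski decomposition of the effective exceptional
divisor `D`: the unique minimal effective anti-nef `ℚ`-divisor with `D ≤ Δ`. -/
def ResolutionData.IsAntiNefPart (X : ResolutionData R) (D Δ : Fin X.s → ℚ) : Prop :=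
  (∀ i, 0 ≤ Δ i) ∧ X.AntiNef Δ ∧ (∀ i, D i ≤ Δ i) ∧
    ∀ Δ' : Fin X.s → ℚ, (∀ i, 0 ≤ Δ' i) → X.AntiNef Δ' → (∀ i, D i ≤ Δ' i) →
      ∀ i, Δ i ≤ Δ' i

namespace ResolutionData

variable (X : ResolutionData R)

theorem inter_comm (v w : Fin X.s → ℚ) : X.inter v w = X.inter w v := by
  rw [inter, inter, Finset.sum_comm]
  refine Finset.sum_congr rfl fun i _ => Finset.sum_congr rfl fun j _ => ?_
  rw [X.Q_symm.apply i j]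
  ring

theorem inter_sub_left (u v w : Fin X.s → ℚ) :
    X.inter (u - v) w = X.inter u w - X.inter v w := by
  simp only [inter, Pi.sub_apply, sub_mul, Finset.sum_sub_distrib]

theorem inter_sub_right (u v w : Fin X.s → ℚ) :
    X.inter u (v - w) = X.inter u v - X.inter u w := by
  simp only [inter, Pi.sub_apply, mul_sub, Finset.sum_sub_distrib]

theorem inter_self_eq_zero_iff (v : Fin X.s → ℚ) : X.inter v v = 0 ↔ v = 0 := by
  refine ⟨fun h => ?_, fun h => by simp [h, inter]⟩
  by_contra hv
  exact (X.Q_negdef v hv).ne h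

theorem inter_nonpos_of_antiNef {v w : Fin X.s → ℚ} (hv : X.AntiNef v) (hw : 0 ≤ w) :
    X.inter v w ≤ 0 := by
  rw [inter, Finset.sum_comm]
  simp_rw [← Finset.sum_mul]
  exact Finset.sum_nonpos fun j _ => mul_nonpos_of_nonpos_of_nonneg (hv j) (hw j)

/-- Writing `w = v + B` with `B ≥ 0`, one has `(w²) - (v²) = (v · B) + (B · w)`, a sum of two
nonpositive terms; if both vanish then `(B²) = (B · w) - (v · B) = 0`, so `B = 0`. -/
theorem inter_self_le_of_antiNef_of_le {v w : Fin X.s → ℚ} (hv : X.AntiNef v)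
    (hw : X.AntiNef w) (hvw : v ≤ w) :
    X.inter w w ≤ X.inter v v ∧ (X.inter w w = X.inter v v ↔ v = w) := by
  have hB : 0 ≤ w - v := sub_nonneg.mpr hvw
  have hvB : X.inter v (w - v) ≤ 0 := X.inter_nonpos_of_antiNef hv hB
  have hBw : X.inter (w - v) w ≤ 0 := by
    rw [inter_comm]
    exact X.inter_nonpos_of_antiNef hw hB
  have hdiff : X.inter w w - X.inter v v = X.inter v (w - v) + X.inter (w - v) w := by
    rw [inter_sub_right, inter_sub_left, X.inter_comm v w]
    ring
  refine ⟨by linarith, fun heq => ?_, fun h => h ▸ rfl⟩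
  have hBB : X.inter (w - v) (w - v) = 0 := by
    rw [inter_sub_right, X.inter_comm _ v]
    linarith
  exact (sub_eq_zero.mp ((X.inter_self_eq_zero_iff _).mp hBB)).symm

variable {X} in
theorem IsAntiNefPart.mono {D₁ D₂ Δ₁ Δ₂ : Fin X.s → ℚ} (h₁ : X.IsAntiNefPart D₁ Δ₁)
    (h₂ : X.IsAntiNefPart D₂ Δ₂) (hD : D₁ ≤ D₂) : Δ₁ ≤ Δ₂ :=
  h₁.2.2.2 Δ₂ h₂.1 h₂.2.1 fun i => (hD i).trans (h₂.2.2.1 i)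

end ResolutionData

theorem antiNefPart_self_inter_le_general
    (X : ResolutionData R)
    (D₁ D₂ : Fin X.s → ℕ) (hle : ∀ i, D₁ i ≤ D₂ i)
    (Δ₁ Δ₂ : Fin X.s → ℚ)
    (h₁ : X.IsAntiNefPart (fun i => (D₁ i : ℚ)) Δ₁)
    (h₂ : X.IsAntiNefPart (fun i => (D₂ i : ℚ)) Δ₂) :
    X.inter Δ₂ Δ₂ ≤ X.inter Δ₁ Δ₁ ∧ (X.inter Δ₂ Δ₂ = X.inter Δ₁ Δ₁ ↔ Δ₁ = Δ₂) :=
  X.inter_self_le_of_antiNef_of_le h₁.2.1 h₂.2.1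
    (h₁.mono h₂ fun i => Nat.cast_le.mpr (hle i))

/-- **Corollary 5.3.**  Let `R` be a two-dimensional excellent normal local
ring and `φ : X → Spec R` a resolution of singularities.  If `D₁ ≤ D₂` are effective divisors
on `X` with exceptional support, with respective anti-nef parts `Δ₁`, `Δ₂` of their Zariski
decompositions, then `(Δ₂²) ≤ (Δ₁²)`, with equality if and only if `Δ₁ = Δ₂`. -/
theorem antiNefPart_self_inter_le
    [IsIntegrallyClosed R] [IsExcellentLocalRing R]
    (hd : ringKrullDim R = 2)
    (X : ResolutionData R)
    (D₁ D₂ : Fin X.s → ℕ) (hle : ∀ i, D₁ i ≤ D₂ i)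
    (Δ₁ Δ₂ : Fin X.s → ℚ)
    (h₁ : X.IsAntiNefPart (fun i => (D₁ i : ℚ)) Δ₁)
    (h₂ : X.IsAntiNefPart (fun i => (D₂ i : ℚ)) Δ₂) :
    X.inter Δ₂ Δ₂ ≤ X.inter Δ₁ Δ₁ ∧ (X.inter Δ₂ Δ₂ = X.inter Δ₁ Δ₁ ↔ Δ₁ = Δ₂) :=
  antiNefPart_self_inter_le_general X D₁ D₂ hle Δ₁ Δ₂ h₁ h₂
end

section
/- Let V be a Hausdorff topological vector space over ℝ and K a strict closed convex cone in V (i.e., K is a closed convex cone with K ∩ (−K) = {0}), with associated partial order x ≤ y iff y − x ∈ K. Then any nonempty subset S of V which is directed with respect to ≤ and is contained in a compact subset of V has a least upper bound with respect to ≤ in V. -/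
/-!
The sets `closure S ∩ {z | x ≤ z}`, `x ∈ S`, are closed and, because `S` is directed, form a
directed family each member of which meets the compact set containing `S`. Hence they have a
common point `b`: an upper bound of `S` lying in `closure S`. Since the lower set of any upper
bound is closed and contains `S`, it contains `b`, so `b` is the least upper bound.
-/

section

variable {X : Type*} [TopologicalSpace X] {r : X → X → Prop} {S C : Set X}

theorem IsCompact.exists_mem_closure_forall_rel_of_directedOn [IsTrans X r]
    (hr : ∀ x, IsClosed {z | r x z}) (hC : IsCompact C) (hSC : S ⊆ C) (hS : S.Nonempty)
    (hdir : DirectedOn r S) : ∃ b ∈ closure S, ∀ x ∈ S, r x b := by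
  have : Nonempty S := hS.to_subtype
  let t : S → Set X := fun x => closure S ∩ {z | r x z}
  have ht_directed : Directed (· ⊇ ·) t := fun x y => by
    obtain ⟨z, hzS, hxz, hyz⟩ := hdir x x.2 y y.2
    exact ⟨⟨z, hzS⟩, fun w hw => ⟨hw.1, _root_.trans hxz hw.2⟩,
      fun w hw => ⟨hw.1, _root_.trans hyz hw.2⟩⟩
  have ht_meets : ∀ x, (C ∩ t x).Nonempty := fun x => by
    obtain ⟨z, hzS, hxz, -⟩ := hdir x x.2 x x.2
    exact ⟨z, hSC hzS, subset_closure hzS, hxz⟩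
  obtain ⟨b, -, hb⟩ : (C ∩ ⋂ x, t x).Nonempty := by
    by_contra h
    obtain ⟨x, hx⟩ := hC.elim_directed_family_closed t
      (fun x => isClosed_closure.inter (hr x)) (Set.not_nonempty_iff_eq_empty.mp h) ht_directed
    exact (ht_meets x).ne_empty hx
  rw [Set.mem_iInter] at hb
  exact ⟨b, (hb ⟨_, hS.some_mem⟩).1, fun x hx => (hb ⟨x, hx⟩).2⟩

theorem IsCompact.exists_lub_of_directedOn [IsTrans X r] (hrIci : ∀ x, IsClosed {z | r x z})
    (hrIic : ∀ x, IsClosed {z | r z x}) (hC : IsCompact C) (hSC : S ⊆ C) (hS : S.Nonempty)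
    (hdir : DirectedOn r S) :
    ∃ b, (∀ x ∈ S, r x b) ∧ ∀ b', (∀ x ∈ S, r x b') → r b b' := by
  obtain ⟨b, hb_closure, hb_upper⟩ :=
    hC.exists_mem_closure_forall_rel_of_directedOn hrIci hSC hS hdir
  exact ⟨b, hb_upper, fun b' hb' => closure_minimal hb' (hrIic b') hb_closure⟩

end

theorem exists_lub_of_directed_of_compact_general
    {V : Type*} [AddCommGroup V] [TopologicalSpace V]
    [IsTopologicalAddGroup V]
    (K : Set V)
    (hKadd : ∀ x ∈ K, ∀ y ∈ K, x + y ∈ K)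
    (hKclosed : IsClosed K)
    (S : Set V) (hSne : S.Nonempty)
    (hdir : ∀ x ∈ S, ∀ y ∈ S, ∃ z ∈ S, z - x ∈ K ∧ z - y ∈ K)
    (hcpt : ∃ C : Set V, IsCompact C ∧ S ⊆ C) :
    ∃ b : V, (∀ x ∈ S, b - x ∈ K) ∧ ∀ b' : V, (∀ x ∈ S, b' - x ∈ K) → b' - b ∈ K := by
  obtain ⟨C, hC, hSC⟩ := hcpt
  have : IsTrans V (fun x y => y - x ∈ K) :=
    ⟨fun x y z hxy hyz => by simpa using hKadd _ hyz _ hxy⟩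
  exact hC.exists_lub_of_directedOn (r := fun x y => y - x ∈ K)
    (fun x => hKclosed.preimage (continuous_id.sub continuous_const))
    (fun x => hKclosed.preimage (continuous_const.sub continuous_id)) hSC hSne hdir

/-- Let `V` be a Hausdorff topological real vector space and `K` a strict
closed convex cone in `V`, with associated partial order `x ≤ y ↔ y - x ∈ K`.  Any nonempty
subset `S` of `V` which is directed with respect to `≤` and contained in a compact subset of
`V` has a least upper bound with respect to `≤`. -/
theorem exists_lub_of_directed_of_compact
    {V : Type*} [AddCommGroup V] [Module ℝ V] [TopologicalSpace V]
    [IsTopologicalAddGroup V] [ContinuousSMul ℝ V] [T2Space V]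
    (K : Set V)
    (hK0 : (0 : V) ∈ K)
    (hKadd : ∀ x ∈ K, ∀ y ∈ K, x + y ∈ K)
    (hKsmul : ∀ c : ℝ, 0 ≤ c → ∀ x ∈ K, c • x ∈ K)
    (hKclosed : IsClosed K)
    (hKstrict : K ∩ (-K) = {0})
    (S : Set V) (hSne : S.Nonempty)
    (hdir : ∀ x ∈ S, ∀ y ∈ S, ∃ z ∈ S, z - x ∈ K ∧ z - y ∈ K)
    (hcpt : ∃ C : Set V, IsCompact C ∧ S ⊆ C) :
    ∃ b : V, (∀ x ∈ S, b - x ∈ K) ∧ ∀ b' : V, (∀ x ∈ S, b' - x ∈ K) → b' - b ∈ K :=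
  exists_lub_of_directed_of_compact_general K hKadd hKclosed S hSne hdir hcpt
end
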